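/- arXiv:1806.04220 — 4 statements merged into one kernel-verified Lean document; each statement's English description precedes it below -/
import Mathlib

section
/- For any integer n ≥ 1, any dimension d ≥ 1, and any probability measure μ on the set P_n of nearest-neighbor paths of length n in Z^d starting from the origin, the degree of localization ℓ(μ) and the expected overlap ρ(μ) satisfy ℓ(μ)² ≤ ρ(μ) ≤ ℓ(μ). -/
open MeasureTheory ProbabilityTheory Set

noncomputable section

/-- A nearest-neighbor path of length `n` in `ℤ^d` starting from the origin: `toFun 0` is the
origin, and consecutive vertices are nearest neighbors in `ℤ^d`. The vertices of the path (as in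
the paper, which omits the starting point) are `toFun 1, …, toFun n`. -/
structure PolymerPath (d n : ℕ) where
  toFun : Fin (n + 1) → Fin d → ℤ
  start_eq : toFun 0 = 0
  adj : ∀ k : Fin n, (∑ i, |toFun k.succ i - toFun k.castSucc i|) = 1

/-- The `k`-th vertex `x_k` of a path, for `k = 1, …, n` (indexed by `Fin n`). -/
def PolymerPath.vertex {d n : ℕ} (p : PolymerPath d n) (k : Fin n) : Fin d → ℤ :=
  p.toFun k.succ

/-- The overlap `|p ∩ q|`, i.e. the number of indices `k ∈ {1, …, n}` with `x_k = x_k'`. -/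
def overlap {d n : ℕ} (p q : PolymerPath d n) : ℕ :=
  (Finset.univ.filter fun k : Fin n => p.vertex k = q.vertex k).card

/-- `ℓ(μ, p) = E|P ∩ p| / n` for `P ∼ μ`. -/
def ellAt {d n : ℕ} (μ : PMF (PolymerPath d n)) (p : PolymerPath d n) : ℝ :=
  (∑' q : PolymerPath d n, (μ q).toReal * (overlap q p : ℝ)) / n

/-- The degree of localization `ℓ(μ) = max_{p ∈ 𝒫_n} E|P ∩ p| / n`. -/
def ell {d n : ℕ} (μ : PMF (PolymerPath d n)) : ℝ :=
  ⨆ p : PolymerPath d n, ellAt μ p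

/-- The expected overlap `ρ(μ) = E|P ∩ P'| / n` for `P, P'` independent with law `μ`. -/
def rho {d n : ℕ} (μ : PMF (PolymerPath d n)) : ℝ :=
  (∑' p : PolymerPath d n, ∑' q : PolymerPath d n,
    (μ p).toReal * (μ q).toReal * (overlap p q : ℝ)) / n

/-! Write `g_k(x) = P(X_k = x)` for the law of the `k`-th vertex. Then `E|P ∩ p| = ∑_k g_k(p_k)`,
so `n ρ = E_P E|P' ∩ P| ≤ n ℓ`. Conversely `g_k(x)² ≤ E g_k(X_k)`, since only paths with `X_k = x`
contribute `g_k(x)` to the right-hand side; summing over `k` and applying Cauchy–Schwarz gives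
`(E|P ∩ p|)² ≤ n ∑_k g_k(p_k)² ≤ n² ρ` for every path `p`. -/

open scoped ENNReal

namespace PMF

variable {α β : Type*}

theorem tsum_mul_le_of_le (μ : PMF α) {f : α → ℝ≥0∞} {c : ℝ≥0∞} (h : ∀ a, f a ≤ c) :
    ∑' a, μ a * f a ≤ c :=
  calc ∑' a, μ a * f a ≤ ∑' a, μ a * c := ENNReal.tsum_le_tsum fun a => mul_le_mul_right (h a) _
    _ = c := by rw [ENNReal.tsum_mul_right, μ.tsum_coe, one_mul]

theorem map_apply_sq_le_tsum_mul (μ : PMF α) (X : α → β) (b : β) :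
    μ.map X b ^ 2 ≤ ∑' a, μ a * μ.map X (X a) := by
  classical
  calc μ.map X b ^ 2 = ∑' a, (if b = X a then μ a else 0) * μ.map X b := by
        rw [sq, map_apply, ENNReal.tsum_mul_right]
    _ ≤ ∑' a, μ a * μ.map X (X a) := ENNReal.tsum_le_tsum fun a => by
        split_ifs with h
        · rw [h]
        · simp

end PMF

section

variable {d n : ℕ}

theorem overlap_comm (p q : PolymerPath d n) : overlap p q = overlap q p := by
  simp only [overlap, eq_comm]

theorem overlap_le (p q : PolymerPath d n) : overlap p q ≤ n :=
  (Finset.card_filter_le _ _).trans_eq (Finset.card_fin n)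

theorem overlap_eq_sum (p q : PolymerPath d n) :
    overlap p q = ∑ k, if p.vertex k = q.vertex k then 1 else 0 :=
  Finset.card_filter _ _

-- Valued in `ℝ≥0∞`, where every series converges, so that sums over paths need no summability
-- arguments; `ellAt_eq_toReal` and `rho_eq_toReal` transfer the results to `ℝ`.
def expectedOverlap (μ : PMF (PolymerPath d n)) (p : PolymerPath d n) : ℝ≥0∞ :=
  ∑' q, μ q * overlap q p

variable (μ : PMF (PolymerPath d n))

theorem expectedOverlap_le (p : PolymerPath d n) : expectedOverlap μ p ≤ n :=
  μ.tsum_mul_le_of_le fun q => Nat.cast_le.2 (overlap_le q p)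

theorem expectedOverlap_ne_top (p : PolymerPath d n) : expectedOverlap μ p ≠ ∞ :=
  ne_top_of_le_ne_top (ENNReal.natCast_ne_top n) (expectedOverlap_le μ p)

theorem expectedOverlap_eq_sum_map (p : PolymerPath d n) :
    expectedOverlap μ p = ∑ k, μ.map (·.vertex k) (p.vertex k) := by
  simp_rw [expectedOverlap, overlap_comm _ p, overlap_eq_sum, Nat.cast_sum, Finset.mul_sum,
    Nat.cast_ite, Nat.cast_one, Nat.cast_zero, mul_ite, mul_one, mul_zero, PMF.map_apply]
  rw [Summable.tsum_finsetSum fun _ _ => ENNReal.summable]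
  congr!

theorem sum_map_sq_le_tsum_mul_expectedOverlap (p : PolymerPath d n) :
    ∑ k, μ.map (·.vertex k) (p.vertex k) ^ 2 ≤ ∑' q, μ q * expectedOverlap μ q := by
  simp_rw [expectedOverlap_eq_sum_map, Finset.mul_sum]
  rw [Summable.tsum_finsetSum fun _ _ => ENNReal.summable]
  exact Finset.sum_le_sum fun k _ => μ.map_apply_sq_le_tsum_mul _ _

theorem ellAt_eq_toReal (p : PolymerPath d n) : ellAt μ p = (expectedOverlap μ p).toReal / n := by
  rw [ellAt, expectedOverlap, ENNReal.tsum_toReal_eq fun q =>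
    ENNReal.mul_ne_top (μ.apply_ne_top q) (ENNReal.natCast_ne_top _)]
  simp

theorem rho_eq_toReal : rho μ = (∑' p, μ p * expectedOverlap μ p).toReal / n := by
  rw [rho, ENNReal.tsum_toReal_eq fun p =>
    ENNReal.mul_ne_top (μ.apply_ne_top p) (expectedOverlap_ne_top μ p)]
  congr 1
  refine tsum_congr fun p => ?_
  rw [ENNReal.toReal_mul, expectedOverlap, ENNReal.tsum_toReal_eq fun q =>
    ENNReal.mul_ne_top (μ.apply_ne_top q) (ENNReal.natCast_ne_top _), ← tsum_mul_left]
  simp [overlap_comm p, mul_assoc]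

theorem ellAt_nonneg (p : PolymerPath d n) : 0 ≤ ellAt μ p := by
  rw [ellAt_eq_toReal]
  positivity

theorem ellAt_le_one (p : PolymerPath d n) : ellAt μ p ≤ 1 := by
  rw [ellAt_eq_toReal]
  refine div_le_one_of_le₀ ?_ (Nat.cast_nonneg n)
  simpa using ENNReal.toReal_mono (ENNReal.natCast_ne_top n) (expectedOverlap_le μ p)

theorem ellAt_le_ell (p : PolymerPath d n) : ellAt μ p ≤ ell μ :=
  le_ciSup ⟨1, Set.forall_mem_range.2 (ellAt_le_one μ)⟩ p

theorem ell_nonneg : 0 ≤ ell μ :=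
  Real.iSup_nonneg (ellAt_nonneg μ)

theorem rho_nonneg : 0 ≤ rho μ := by
  rw [rho_eq_toReal]
  positivity

theorem toReal_expectedOverlap_sq_le (p : PolymerPath d n) :
    (expectedOverlap μ p).toReal ^ 2 ≤ n * (∑' q, μ q * expectedOverlap μ q).toReal := by
  have h_ne_top : ∑' q, μ q * expectedOverlap μ q ≠ ∞ :=
    ne_top_of_le_ne_top (ENNReal.natCast_ne_top n) (μ.tsum_mul_le_of_le (expectedOverlap_le μ))
  calc _ = (∑ k, (μ.map (·.vertex k) (p.vertex k)).toReal) ^ 2 := by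
        rw [expectedOverlap_eq_sum_map, ENNReal.toReal_sum fun k _ => PMF.apply_ne_top _ _]
    _ ≤ n * ∑ k, (μ.map (·.vertex k) (p.vertex k)).toReal ^ 2 := by
        simpa using sq_sum_le_card_mul_sum_sq (s := Finset.univ)
          (f := fun k => (μ.map (·.vertex k) (p.vertex k)).toReal)
    _ = n * (∑ k, μ.map (·.vertex k) (p.vertex k) ^ 2).toReal := by
        rw [ENNReal.toReal_sum fun k _ => ENNReal.pow_ne_top (PMF.apply_ne_top _ _)]
        simp only [ENNReal.toReal_pow]
    _ ≤ _ := mul_le_mul_of_nonneg_left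
        (ENNReal.toReal_mono h_ne_top (sum_map_sq_le_tsum_mul_expectedOverlap μ p)) n.cast_nonneg

theorem ellAt_sq_le_rho (p : PolymerPath d n) : ellAt μ p ^ 2 ≤ rho μ := by
  rw [ellAt_eq_toReal, rho_eq_toReal, div_pow]
  rcases n.eq_zero_or_pos with rfl | hn
  · simp
  rw [div_le_div_iff₀ (by positivity) (by positivity)]
  calc _ ≤ n * (∑' q, μ q * expectedOverlap μ q).toReal * n := by
        gcongr
        exact toReal_expectedOverlap_sq_le μ p
    _ = (∑' q, μ q * expectedOverlap μ q).toReal * n ^ 2 := by ring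

theorem rho_le_ell : rho μ ≤ ell μ := by
  rcases n.eq_zero_or_pos with rfl | hn
  · simpa [rho] using ell_nonneg μ
  have h : ∀ p, expectedOverlap μ p ≤ ENNReal.ofReal (n * ell μ) := fun p => by
    rw [ENNReal.le_ofReal_iff_toReal_le (expectedOverlap_ne_top μ p)
      (mul_nonneg n.cast_nonneg (ell_nonneg μ))]
    have := ellAt_le_ell μ p
    rwa [ellAt_eq_toReal, div_le_iff₀ (by positivity), mul_comm] at this
  rw [rho_eq_toReal, div_le_iff₀ (by positivity), mul_comm]
  exact ENNReal.toReal_le_of_le_ofReal (mul_nonneg n.cast_nonneg (ell_nonneg μ))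
    (μ.tsum_mul_le_of_le h)

theorem ell_sq_le_rho : ell μ ^ 2 ≤ rho μ := by
  have ell_le_sqrt_rho : ell μ ≤ √(rho μ) := Real.iSup_le
    (fun p => (Real.le_sqrt (ellAt_nonneg μ p) (rho_nonneg μ)).2 (ellAt_sq_le_rho μ p))
    (Real.sqrt_nonneg _)
  calc ell μ ^ 2 ≤ √(rho μ) ^ 2 := pow_le_pow_left₀ (ell_nonneg μ) ell_le_sqrt_rho 2
    _ = rho μ := Real.sq_sqrt (rho_nonneg μ)

end

theorem ell_sq_le_rho_and_rho_le_ell_general (d n : ℕ)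
    (μ : PMF (PolymerPath d n)) :
    ell μ ^ 2 ≤ rho μ ∧ rho μ ≤ ell μ :=
  ⟨ell_sq_le_rho μ, rho_le_ell μ⟩

/-- Proposition 1.4: `ℓ(μ)² ≤ ρ(μ) ≤ ℓ(μ)`. -/
theorem ell_sq_le_rho_and_rho_le_ell (d n : ℕ) (hd : 1 ≤ d) (hn : 1 ≤ n)
    (μ : PMF (PolymerPath d n)) :
    ell μ ^ 2 ≤ rho μ ∧ rho μ ≤ ell μ :=
  ell_sq_le_rho_and_rho_le_ell_general d n μ

end
end

section
/- Under the stated assumptions on the density f, the function h defined by h(x) = (∫_x^b (y − m) f(y) dy)/f(x) is strictly positive at every point of (a,b), and sup_{a<x<b} h(x) < ∞. -/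
open MeasureTheory ProbabilityTheory Set

noncomputable section

/-- The mean `m = ∫_a^b x f(x) dx` of the probability density `f` supported on `(a,b)`. -/
def densityMean (a b : ℝ) (f : ℝ → ℝ) : ℝ :=
  ∫ x in Set.Ioo a b, x * f x

/-- The function `h(x) = (∫_x^b (y − m) f(y) dy) / f(x)` for `x ∈ (a,b)`. -/
def hFun (a b : ℝ) (f : ℝ → ℝ) (x : ℝ) : ℝ :=
  (∫ y in Set.Ioo x b, (y - densityMean a b f) * f y) / f x

/-! A sign-change argument gives positivity: the integrand `(y - m) f(y)` has total integral `0`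
and is negative left of `m` and positive right of it, so every tail integral `∫_x^b` is positive
(for `x ≥ m` directly, for `x < m` because it equals minus the negative integral over `(a, x)`).
Boundedness follows from the mean value theorem: a bounded derivative makes `h` Lipschitz on the
bounded interval `(a, b)`. -/

theorem setIntegral_Ioo_eq_intervalIntegral {g : ℝ → ℝ} {x b : ℝ} (hxb : x ≤ b) :
    ∫ y in Ioo x b, g y = ∫ y in x..b, g y := by
  rw [intervalIntegral.integral_of_le hxb, integral_Ioc_eq_integral_Ioo]

theorem intervalIntegral_pos_of_sign_change {g : ℝ → ℝ} {a b m x : ℝ}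
    (hg : IntervalIntegrable g volume a b) (hg_zero : ∫ y in a..b, g y = 0)
    (hg_neg : ∀ y ∈ Ioo a b, y < m → g y < 0) (hg_pos : ∀ y ∈ Ioo a b, m < y → 0 < g y)
    (hx : x ∈ Ioo a b) : 0 < ∫ y in x..b, g y := by
  have hx_mem : x ∈ uIcc a b := Icc_subset_uIcc (Ioo_subset_Icc_self hx)
  have hleft : IntervalIntegrable g volume a x := hg.mono_set (uIcc_subset_uIcc_left hx_mem)
  have hright : IntervalIntegrable g volume x b := hg.mono_set (uIcc_subset_uIcc_right hx_mem)
  rcases le_or_gt m x with hmx | hxm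
  · exact intervalIntegral.intervalIntegral_pos_of_pos_on hright
      (fun y hy => hg_pos y ⟨hx.1.trans hy.1, hy.2⟩ (hmx.trans_lt hy.1)) hx.2
  · have hleft_neg : 0 < ∫ y in a..x, -g y :=
      intervalIntegral.intervalIntegral_pos_of_pos_on hleft.neg
        (fun y hy => neg_pos.2 (hg_neg y ⟨hy.1, hy.2.trans hx.2⟩ (hy.2.trans hxm))) hx.1
    have hsplit := intervalIntegral.integral_add_adjacent_intervals hleft hright
    rw [intervalIntegral.integral_neg] at hleft_neg
    linarith

theorem integral_sub_densityMean_mul_eq_zero {a b : ℝ} {f : ℝ → ℝ}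
    (hf : IntervalIntegrable f volume a b) (hab : a ≤ b) (hf_prob : ∫ x in Ioo a b, f x = 1) :
    ∫ y in a..b, (y - densityMean a b f) * f y = 0 := by
  have hf_prob' : ∫ y in a..b, f y = 1 := by
    rw [← setIntegral_Ioo_eq_intervalIntegral hab, hf_prob]
  simp_rw [sub_mul]
  rw [intervalIntegral.integral_sub (hf.continuousOn_mul (g := fun y => y) continuousOn_id)
      (hf.const_mul _),
    intervalIntegral.integral_const_mul, hf_prob', densityMean,
    setIntegral_Ioo_eq_intervalIntegral hab, mul_one, sub_self]

theorem hFun_pos {a b : ℝ} (hab : a ≤ b) {f : ℝ → ℝ} (hf_pos : ∀ x ∈ Ioo a b, 0 < f x)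
    (hf_int : IntegrableOn f (Ioo a b)) (hf_prob : ∫ x in Ioo a b, f x = 1) {x : ℝ}
    (hx : x ∈ Ioo a b) : 0 < hFun a b f x := by
  have hf : IntervalIntegrable f volume a b :=
    (intervalIntegrable_iff_integrableOn_Ioo_of_le hab).2 hf_int
  refine div_pos ?_ (hf_pos x hx)
  rw [setIntegral_Ioo_eq_intervalIntegral hx.2.le]
  exact intervalIntegral_pos_of_sign_change (hf.continuousOn_mul (by fun_prop))
    (integral_sub_densityMean_mul_eq_zero hf hab hf_prob)
    (fun y hy hym => mul_neg_of_neg_of_pos (sub_neg.2 hym) (hf_pos y hy))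
    (fun y hy hmy => mul_pos (sub_pos.2 hmy) (hf_pos y hy)) hx

theorem Convex.isBounded_image_of_abs_deriv_le {g : ℝ → ℝ} {s : Set ℝ} {C : ℝ}
    (hs : Convex ℝ s) (hs_bdd : Bornology.IsBounded s) (hg : ∀ x ∈ s, DifferentiableAt ℝ g x)
    (hC : ∀ x ∈ s, |deriv g x| ≤ C) : Bornology.IsBounded (g '' s) := by
  have hlip : LipschitzOnWith (Real.toNNReal C) g s :=
    hs.lipschitzOnWith_of_nnnorm_deriv_le hg fun x hx =>
      (Real.le_toNNReal_iff_coe_le (abs_nonneg _ |>.trans (hC x hx))).2 (hC x hx)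
  obtain ⟨G, hG, hgG⟩ := hlip.extend_real
  exact hgG.image_eq ▸ hG.isBounded_image hs_bdd

theorem hFun_pos_and_bddAbove_general (a b : ℝ) (hab : a < b) (f : ℝ → ℝ)
    (hf_pos : ∀ x ∈ Set.Ioo a b, 0 < f x)
    (hf_int : IntegrableOn f (Set.Ioo a b))
    (hf_prob : ∫ x in Set.Ioo a b, f x = 1)
    (hh_diff : ∀ x ∈ Set.Ioo a b, DifferentiableAt ℝ (hFun a b f) x)
    (hh_deriv_bdd : ∃ C : ℝ, ∀ x ∈ Set.Ioo a b, |deriv (hFun a b f) x| ≤ C) :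
    (∀ x ∈ Set.Ioo a b, 0 < hFun a b f x) ∧ BddAbove (hFun a b f '' Set.Ioo a b) := by
  obtain ⟨C, hC⟩ := hh_deriv_bdd
  exact ⟨fun x hx => hFun_pos hab.le hf_pos hf_int hf_prob hx,
    ((convex_Ioo a b).isBounded_image_of_abs_deriv_le (Metric.isBounded_Ioo a b) hh_diff
      hC).bddAbove⟩

/-- Lemma 2.1: under the stated assumptions on the density `f`, the function
`h` is strictly positive everywhere in `(a,b)` and uniformly bounded above. -/
theorem hFun_pos_and_bddAbove (a b : ℝ) (hab : a < b) (f : ℝ → ℝ)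
    (hf_pos : ∀ x ∈ Set.Ioo a b, 0 < f x)
    (hf_zero : ∀ x ∉ Set.Ioo a b, f x = 0)
    (hf_diff : ∀ x ∈ Set.Ioo a b, DifferentiableAt ℝ f x)
    (hf_int : IntegrableOn f (Set.Ioo a b))
    (hf_prob : ∫ x in Set.Ioo a b, f x = 1)
    (hh_diff : ∀ x ∈ Set.Ioo a b, DifferentiableAt ℝ (hFun a b f) x)
    (hh_deriv_bdd : ∃ C : ℝ, ∀ x ∈ Set.Ioo a b, |deriv (hFun a b f) x| ≤ C) :
    (∀ x ∈ Set.Ioo a b, 0 < hFun a b f x) ∧ BddAbove (hFun a b f '' Set.Ioo a b) :=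
  hFun_pos_and_bddAbove_general a b hab f hf_pos hf_int hf_prob hh_diff hh_deriv_bdd

end
end

section
/- If X is a random variable with probability density f, then for any differentiable function g : (a,b) → ℝ such that g and g' are uniformly bounded, Var(g(X)) ≤ K · E(g'(X)²), where K = sup_{a<x<b} |h(x)|. -/
/-!
Let `m` be the mean of `ν`. A variance is at most the second moment about any point, so
`Var g(X) ≤ E (g(X) - g(m))²`, and Cauchy–Schwarz on `[m, x]` gives
`(g(x) - g(m))² ≤ (x - m) ∫_m^x g'²`. Exchanging the order of integration and using
`E (X - m) = 0`, `E[(X - m) ∫_m^X g'²] = ∫ g'(t)² E[(X - m); X ≥ t] dt`, and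
`E[(X - m); X ≥ t] = h(t) f(t) ≤ K f(t)`, which turns the bound into `K E g'(X)²`.
-/

open MeasureTheory ProbabilityTheory Set

noncomputable section

theorem integral_pos_of_ae_pos {α : Type*} [MeasurableSpace α] {μ : Measure α} [NeZero μ]
    {u : α → ℝ} (hu : Integrable u μ) (hpos : ∀ᵐ x ∂μ, 0 < u x) :
    0 < ∫ x, u x ∂μ := by
  rw [integral_pos_iff_support_of_nonneg_ae (hpos.mono fun x hx => hx.le) hu]
  refine pos_iff_ne_zero.2 fun h0 => ?_
  have hzero : ∀ᵐ x ∂μ, u x = 0 := by simpa [ae_iff, Function.support] using h0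
  obtain ⟨x, hx, hx0⟩ := (hpos.and hzero).exists
  exact hx.ne' hx0

theorem integrable_sub_of_ae_mem_Ioo {μ : Measure ℝ} [IsFiniteMeasure μ] {a b : ℝ}
    (hμ : ∀ᵐ x ∂μ, x ∈ Ioo a b) (c : ℝ) : Integrable (fun x => x - c) μ :=
  .of_bound (by fun_prop) (max |a - c| |b - c|)
    (hμ.mono fun x hx => abs_le_max_abs_abs (by linarith [hx.1]) (by linarith [hx.2]))

theorem integral_id_mem_Ioo {μ : Measure ℝ} [IsProbabilityMeasure μ] {a b : ℝ}
    (h : ∀ᵐ x ∂μ, x ∈ Ioo a b) : ∫ x, x ∂μ ∈ Ioo a b := by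
  have hint : Integrable (fun x => x) μ := by simpa using integrable_sub_of_ae_mem_Ioo h 0
  have hlo := integral_pos_of_ae_pos (u := fun x => x - a) (hint.sub (integrable_const a))
    (h.mono fun x hx => sub_pos.2 hx.1)
  have hhi := integral_pos_of_ae_pos (u := fun x => b - x) ((integrable_const b).sub hint)
    (h.mono fun x hx => sub_pos.2 hx.2)
  rw [integral_sub hint (integrable_const a)] at hlo
  rw [integral_sub (integrable_const b) hint] at hhi
  simp only [integral_const, probReal_univ, smul_eq_mul, one_mul] at hlo hhi
  exact ⟨by linarith, by linarith⟩

theorem integrable_indicator_Ioo_of_abs_le {u : ℝ → ℝ} {a b C : ℝ}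
    (hu : AEStronglyMeasurable u) (hC : ∀ x ∈ Ioo a b, |u x| ≤ C) :
    Integrable ((Ioo a b).indicator u) :=
  (Measure.integrableOn_of_bounded measure_Ioo_lt_top.ne hu
    (ae_restrict_of_forall_mem measurableSet_Ioo hC)).integrable_indicator measurableSet_Ioo

theorem integrable_indicator_Ioo_sq_of_abs_le {u : ℝ → ℝ} {a b C : ℝ}
    (hu : AEStronglyMeasurable u) (hC : ∀ x ∈ Ioo a b, |u x| ≤ C) :
    Integrable fun t => (Ioo a b).indicator u t ^ 2 := by
  have hsq : (fun t => (Ioo a b).indicator u t ^ 2) = (Ioo a b).indicator (fun t => u t ^ 2) := by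
    ext t; by_cases ht : t ∈ Ioo a b <;> simp [ht]
  rw [hsq]
  exact integrable_indicator_Ioo_of_abs_le (hu.pow 2)
    fun x hx => by rw [abs_pow]; exact pow_le_pow_left₀ (abs_nonneg _) (hC x hx) 2

theorem ContinuousOn.aemeasurable_of_eq_zero_compl {μ : Measure ℝ} {f : ℝ → ℝ}
    {s : Set ℝ} (hf : ContinuousOn f s) (hs : MeasurableSet s) (h0 : ∀ x ∉ s, f x = 0) :
    AEMeasurable f μ := by
  rw [← indicator_eq_self.2 (Function.support_subset_iff'.2 h0)]
  exact (aemeasurable_indicator_iff hs).2 (hf.aemeasurable hs)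

theorem integral_withDensity_ofReal {α : Type*} [MeasurableSpace α] {μ : Measure α}
    {f : α → ℝ} (hf : AEMeasurable f μ) (hf0 : 0 ≤ᵐ[μ] f) (u : α → ℝ) :
    ∫ x, u x ∂μ.withDensity (fun x => ENNReal.ofReal (f x)) = ∫ x, f x * u x ∂μ := by
  rw [integral_withDensity_eq_integral_toReal_smul₀ hf.ennreal_ofReal
    (Filter.Eventually.of_forall fun _ => ENNReal.ofReal_lt_top)]
  refine integral_congr_ae (hf0.mono fun x hx => ?_)
  simp [ENNReal.toReal_ofReal hx]

theorem ae_mem_withDensity_ofReal {α : Type*} [MeasurableSpace α] {μ : Measure α} [SFinite μ]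
    {f : α → ℝ} {s : Set α} (hs : MeasurableSet s) (hf : ∀ x ∉ s, f x = 0) :
    ∀ᵐ x ∂μ.withDensity (fun x => ENNReal.ofReal (f x)), x ∈ s := by
  rw [ae_iff, withDensity_apply']
  exact (setLIntegral_congr_fun hs.compl fun x hx => by simp [hf x hx]).trans lintegral_zero

theorem integrable_of_isProbabilityMeasure_withDensity {α : Type*} [MeasurableSpace α]
    {μ : Measure α} {f : α → ℝ} (hf : AEMeasurable f μ) (hf0 : ∀ x, 0 ≤ f x)
    [IsProbabilityMeasure (μ.withDensity fun x => ENNReal.ofReal (f x))] : Integrable f μ := by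
  refine ⟨hf.aestronglyMeasurable, ?_⟩
  have hmass := measure_univ (μ := μ.withDensity fun x => ENNReal.ofReal (f x))
  rw [withDensity_apply _ MeasurableSet.univ, setLIntegral_univ] at hmass
  rw [hasFiniteIntegral_iff_ofReal (Filter.Eventually.of_forall hf0), hmass]
  exact ENNReal.one_lt_top

theorem bddAbove_abs_image_Ioo_of_abs_deriv_le {h : ℝ → ℝ} {a b C : ℝ}
    (hd : ∀ x ∈ Ioo a b, DifferentiableAt ℝ h x) (hC : ∀ x ∈ Ioo a b, |deriv h x| ≤ C) :
    BddAbove ((fun x => |h x|) '' Ioo a b) := by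
  rcases (Ioo a b).eq_empty_or_nonempty with he | ⟨x₀, hx₀⟩
  · simp [he]
  refine ⟨|h x₀| + C * (b - a), ?_⟩
  rintro _ ⟨x, hx, rfl⟩
  have hmvt := (convex_Ioo a b).norm_image_sub_le_of_norm_deriv_le hd hC hx₀ hx
  have hdist : |x - x₀| ≤ b - a :=
    abs_sub_le_iff.2 ⟨by linarith [hx.2, hx₀.1], by linarith [hx.1, hx₀.2]⟩
  have hC0 : 0 ≤ C := (abs_nonneg _).trans (hC x₀ hx₀)
  simp only [Real.norm_eq_abs] at hmvt
  calc |h x| ≤ |h x₀| + |h x - h x₀| := by linarith [abs_sub_abs_le_abs_sub (h x) (h x₀)]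
    _ ≤ |h x₀| + C * (b - a) := by gcongr; exact hmvt.trans (by gcongr)

theorem sq_integral_le_measureReal_univ_mul_integral_sq {α : Type*} [MeasurableSpace α]
    {μ : Measure α} [IsFiniteMeasure μ] {u : α → ℝ} (hu : Integrable u μ)
    (hu2 : Integrable (fun x => u x ^ 2) μ) :
    (∫ x, u x ∂μ) ^ 2 ≤ μ.real univ * ∫ x, u x ^ 2 ∂μ := by
  rcases eq_zero_or_neZero μ with rfl | _
  · simp
  have hpos : 0 < μ.real univ := measureReal_univ_pos
  have hJensen := (even_two.convexOn_pow (𝕜 := ℝ)).map_average_le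
    (continuous_pow 2).continuousOn isClosed_univ
    (Filter.Eventually.of_forall fun x => mem_univ (u x)) hu hu2
  rw [average_eq, average_eq, smul_eq_mul, smul_eq_mul, mul_pow] at hJensen
  have := mul_le_mul_of_nonneg_left hJensen (sq_nonneg (μ.real univ))
  field_simp at this
  linarith

theorem sq_sub_le_mul_intervalIntegral_sq {g g' : ℝ → ℝ} {c x : ℝ}
    (hg : ∀ t ∈ uIcc c x, HasDerivAt g (g' t) t) (hg' : IntervalIntegrable g' volume c x)
    (hg'2 : IntervalIntegrable (fun t => g' t ^ 2) volume c x) :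
    (g x - g c) ^ 2 ≤ (x - c) * ∫ t in c..x, g' t ^ 2 := by
  wlog hcx : c ≤ x generalizing c x
  · have := this (fun t ht => hg t (uIcc_comm c x ▸ ht)) hg'.symm hg'2.symm (le_of_not_ge hcx)
    rw [intervalIntegral.integral_symm]
    linarith
  have : Fact (volume (Ioc c x) < ⊤) := ⟨measure_Ioc_lt_top⟩
  rw [← intervalIntegral.integral_eq_sub_of_hasDerivAt hg hg',
    intervalIntegral.integral_of_le hcx, intervalIntegral.integral_of_le hcx]
  simpa [Real.volume_real_Ioc_of_le hcx] using
    sq_integral_le_measureReal_univ_mul_integral_sq (μ := volume.restrict (Ioc c x))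
      hg'.1 hg'2.1

section IntervalKernel

variable {μ : Measure ℝ} {c : ℝ} {G : ℝ → ℝ}

/-- For `t` between `c` and `x` the bracket is `G t` with the sign of `x - c`; for all other `t`
it vanishes. -/
def intervalKernel (c : ℝ) (G : ℝ → ℝ) (x t : ℝ) : ℝ :=
  (x - c) * ((Iic x).indicator G t - (Iic c).indicator G t)

theorem integral_intervalKernel_right (hG : Integrable G) (x : ℝ) :
    ∫ t, intervalKernel c G x t = (x - c) * ∫ t in c..x, G t := by
  simp only [intervalKernel]
  rw [integral_const_mul, integral_sub (hG.indicator measurableSet_Iic)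
    (hG.indicator measurableSet_Iic), integral_indicator measurableSet_Iic,
    integral_indicator measurableSet_Iic,
    intervalIntegral.integral_Iic_sub_Iic hG.integrableOn hG.integrableOn]

theorem integral_intervalKernel_left (hμ : Integrable (fun x => x - c) μ)
    (hc : ∫ x, (x - c) ∂μ = 0) (t : ℝ) :
    ∫ x, intervalKernel c G x t ∂μ = G t * ∫ x in Ici t, (x - c) ∂μ := by
  have hsplit : ∀ x, intervalKernel c G x t
      = (Ici t).indicator (fun x => (x - c) * G t) x - (x - c) * (Iic c).indicator G t := by
    intro x
    by_cases hx : t ≤ x <;> simp [intervalKernel, indicator_apply, hx, mul_sub]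
  simp_rw [hsplit]
  rw [integral_sub ((hμ.mul_const _).indicator measurableSet_Ici) (hμ.mul_const _),
    integral_indicator measurableSet_Ici, integral_mul_const, integral_mul_const, hc]
  ring

theorem integrable_intervalKernel (hμ : Integrable (fun x => x - c) μ) (hG : Integrable G) :
    Integrable (Function.uncurry (intervalKernel c G)) (μ.prod volume) := by
  refine Integrable.mono' ((hμ.norm.mul_prod hG.norm).const_mul 2) ?_
    (Filter.Eventually.of_forall fun p => ?_)
  · have hG_snd : AEStronglyMeasurable (fun p : ℝ × ℝ => G p.2) (μ.prod volume) :=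
      hG.aestronglyMeasurable.comp_snd
    refine ((hμ.aestronglyMeasurable.comp_fst (ν := volume)).mul
      ((hG_snd.indicator (measurableSet_le measurable_snd measurable_fst)).sub
        (hG.aestronglyMeasurable.indicator (measurableSet_Iic (a := c))).comp_snd)).congr
      (Filter.Eventually.of_forall fun p => ?_)
    simp [intervalKernel, indicator_apply, Function.uncurry]
  · have hind := (norm_sub_le _ _).trans
      (add_le_add (norm_indicator_le_norm_self G (s := Iic p.1) p.2)
        (norm_indicator_le_norm_self G (s := Iic c) p.2))
    simp only [Function.uncurry, intervalKernel, norm_mul]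
    nlinarith [norm_nonneg (p.1 - c)]

theorem integrable_sub_mul_intervalIntegral (hμ : Integrable (fun x => x - c) μ)
    (hG : Integrable G) : Integrable (fun x => (x - c) * ∫ t in c..x, G t) μ := by
  simpa only [Function.uncurry_apply_pair, integral_intervalKernel_right hG] using
    (integrable_intervalKernel hμ hG).integral_prod_left

theorem integrable_mul_setIntegral_Ici_sub [SFinite μ] (hμ : Integrable (fun x => x - c) μ)
    (hc : ∫ x, (x - c) ∂μ = 0) (hG : Integrable G) :
    Integrable (fun t => G t * ∫ x in Ici t, (x - c) ∂μ) := by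
  simpa only [Function.uncurry_apply_pair, integral_intervalKernel_left hμ hc] using
    (integrable_intervalKernel hμ hG).integral_prod_right

theorem integral_sub_mul_intervalIntegral [SFinite μ] (hμ : Integrable (fun x => x - c) μ)
    (hc : ∫ x, (x - c) ∂μ = 0) (hG : Integrable G) :
    ∫ x, (x - c) * (∫ t in c..x, G t) ∂μ = ∫ t, G t * ∫ x in Ici t, (x - c) ∂μ := by
  simp only [← integral_intervalKernel_right hG, ← integral_intervalKernel_left hμ hc]
  exact integral_integral_swap (integrable_intervalKernel hμ hG)

theorem integral_sub_mul_intervalIntegral_le [SFinite μ] (hμ : Integrable (fun x => x - c) μ)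
    (hc : ∫ x, (x - c) ∂μ = 0) (hG : Integrable G) {H : ℝ → ℝ} (hH : Integrable H)
    (hGH : ∀ t, G t * ∫ x in Ici t, (x - c) ∂μ ≤ H t) :
    ∫ x, (x - c) * (∫ t in c..x, G t) ∂μ ≤ ∫ t, H t := by
  rw [integral_sub_mul_intervalIntegral hμ hc hG]
  exact integral_mono (integrable_mul_setIntegral_Ici_sub hμ hc hG) hH hGH

end IntervalKernel

theorem variance_le_integral_sub_mul_intervalIntegral_deriv_sq {μ : Measure ℝ}
    [IsProbabilityMeasure μ] {a b c C : ℝ} (hμ : ∀ᵐ x ∂μ, x ∈ Ioo a b)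
    (hc : c ∈ Ioo a b) {g : ℝ → ℝ} (hg : ∀ x ∈ Ioo a b, DifferentiableAt ℝ g x)
    (hg' : ∀ x ∈ Ioo a b, |deriv g x| ≤ C) :
    variance g μ ≤
      ∫ x, (x - c) * (∫ t in c..x, (Ioo a b).indicator (deriv g) t ^ 2) ∂μ := by
  set g' := (Ioo a b).indicator (deriv g)
  have hg'_int : Integrable g' :=
    integrable_indicator_Ioo_of_abs_le (measurable_deriv g).aestronglyMeasurable hg'
  have hg'2_int : Integrable (fun t => g' t ^ 2) :=
    integrable_indicator_Ioo_sq_of_abs_le (measurable_deriv g).aestronglyMeasurable hg'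
  have hg_meas : AEStronglyMeasurable g μ := by
    rw [← Measure.restrict_eq_self_of_ae_mem hμ]
    exact ContinuousOn.aestronglyMeasurable
      (fun x hx => (hg x hx).continuousAt.continuousWithinAt) measurableSet_Ioo
  calc variance g μ = variance (fun x => g x - g c) μ := (variance_sub_const hg_meas _).symm
    _ ≤ ∫ x, (g x - g c) ^ 2 ∂μ :=
        variance_le_expectation_sq (hg_meas.sub aestronglyMeasurable_const)
    _ ≤ _ := integral_mono_of_nonneg (Filter.Eventually.of_forall fun x => sq_nonneg _)
        (integrable_sub_mul_intervalIntegral (integrable_sub_of_ae_mem_Ioo hμ c) hg'2_int)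
        (hμ.mono fun x hx => ?_)
  refine sq_sub_le_mul_intervalIntegral_sq (fun t ht => ?_) hg'_int.intervalIntegrable
    hg'2_int.intervalIntegrable
  have ht' : t ∈ Ioo a b := ordConnected_Ioo.uIcc_subset hc hx ht
  simpa [g', ht'] using (hg t ht').hasDerivAt

theorem variance_le_integral_of_deriv_sq_mul_le {μ : Measure ℝ} [IsProbabilityMeasure μ]
    {a b C : ℝ} (hμ : ∀ᵐ x ∂μ, x ∈ Ioo a b) {g : ℝ → ℝ}
    (hg : ∀ x ∈ Ioo a b, DifferentiableAt ℝ g x) (hg' : ∀ x ∈ Ioo a b, |deriv g x| ≤ C)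
    {H : ℝ → ℝ} (hH : Integrable H)
    (hgH : ∀ t,
      (Ioo a b).indicator (deriv g) t ^ 2 * ∫ x in Ici t, (x - ∫ y, y ∂μ) ∂μ ≤ H t) :
    variance g μ ≤ ∫ t, H t := by
  have hc : ∫ x, (x - ∫ y, y ∂μ) ∂μ = 0 := by
    rw [integral_sub (by simpa using integrable_sub_of_ae_mem_Ioo hμ 0) (integrable_const _)]
    simp
  exact (variance_le_integral_sub_mul_intervalIntegral_deriv_sq hμ (integral_id_mem_Ioo hμ) hg
    hg').trans (integral_sub_mul_intervalIntegral_le (integrable_sub_of_ae_mem_Ioo hμ _) hc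
      (integrable_indicator_Ioo_sq_of_abs_le (measurable_deriv g).aestronglyMeasurable hg') hH hgH)

section Density

variable {a b : ℝ} {f : ℝ → ℝ}

theorem densityMean_eq_integral (hf : AEMeasurable f) (hf0 : ∀ x, 0 ≤ f x)
    (hf_zero : ∀ x ∉ Ioo a b, f x = 0) :
    densityMean a b f = ∫ x, x ∂volume.withDensity fun x => ENNReal.ofReal (f x) := by
  rw [integral_withDensity_ofReal hf (Filter.Eventually.of_forall hf0), densityMean,
    setIntegral_eq_integral_of_forall_compl_eq_zero fun x hx => by simp [hf_zero x hx]]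
  simp_rw [mul_comm]

theorem setIntegral_Ici_sub_densityMean (hf : AEMeasurable f) (hf0 : ∀ x, 0 ≤ f x)
    (hf_zero : ∀ x ∉ Ioo a b, f x = 0) {t : ℝ} (hft : f t ≠ 0) :
    ∫ x in Ici t, (x - densityMean a b f) ∂volume.withDensity (fun x => ENNReal.ofReal (f x))
      = hFun a b f t * f t := by
  rw [restrict_withDensity measurableSet_Ici,
    integral_withDensity_ofReal hf.restrict (Filter.Eventually.of_forall hf0),
    ← setIntegral_congr_set Ioi_ae_eq_Ici,
    setIntegral_eq_of_subset_of_forall_sdiff_eq_zero measurableSet_Ioi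
      (Ioo_subset_Ioi_self : Ioo t b ⊆ Ioi t)
      fun x hx => by simp [hf_zero x fun h => hx.2 ⟨hx.1, h.2⟩],
    hFun, div_mul_cancel₀ _ hft]
  simp_rw [mul_comm]

theorem variance_le_mul_integral_sq_of_setIntegral_Ici_le {C K : ℝ} {g g' : ℝ → ℝ}
    (hf : AEMeasurable f) (hf0 : ∀ x, 0 ≤ f x) (hf_zero : ∀ x ∉ Ioo a b, f x = 0)
    {ν : Measure ℝ} [IsProbabilityMeasure ν]
    (hν : ν = volume.withDensity fun x => ENNReal.ofReal (f x))
    (hg : ∀ x ∈ Ioo a b, HasDerivAt g (g' x) x) (hg' : ∀ x ∈ Ioo a b, |g' x| ≤ C)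
    (hK : ∀ t ∈ Ioo a b, ∫ x in Ici t, (x - ∫ y, y ∂ν) ∂ν ≤ K * f t) :
    variance g ν ≤ K * ∫ x, g' x ^ 2 ∂ν := by
  subst hν
  -- unlike `g'`, `deriv g` is measurable, and the two agree on `(a,b)`
  set G := fun t => (Ioo a b).indicator (deriv g) t ^ 2
  have hderiv : ∀ x ∈ Ioo a b, deriv g x = g' x := fun x hx => (hg x hx).deriv
  have hG_le : ∀ t, ‖G t‖ ≤ C ^ 2 := fun t => by
    by_cases ht : t ∈ Ioo a b
    · simpa [G, ht, hderiv t ht] using pow_le_pow_left₀ (abs_nonneg _) (hg' t ht) 2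
    · simp [G, ht, sq_nonneg]
  have hKfG : Integrable fun t => K * (f t * G t) :=
    ((integrable_of_isProbabilityMeasure_withDensity hf hf0).mul_bdd
      (((measurable_deriv g).indicator measurableSet_Ioo).pow_const 2).aestronglyMeasurable
      (Filter.Eventually.of_forall hG_le)).const_mul K
  calc variance g _ ≤ ∫ t, K * (f t * G t) := by
        refine variance_le_integral_of_deriv_sq_mul_le
          (ae_mem_withDensity_ofReal measurableSet_Ioo hf_zero)
          (fun x hx => (hg x hx).differentiableAt) (fun x hx => hderiv x hx ▸ hg' x hx) hKfG
          fun t => ?_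
        by_cases ht : t ∈ Ioo a b
        · nlinarith [hK t ht, sq_nonneg ((Ioo a b).indicator (deriv g) t)]
        · simp [G, ht]
    _ = K * ∫ x, g' x ^ 2 ∂volume.withDensity fun x => ENNReal.ofReal (f x) := by
        rw [integral_const_mul, integral_withDensity_ofReal hf (Filter.Eventually.of_forall hf0)]
        congr 1
        refine integral_congr_ae (Filter.Eventually.of_forall fun x => ?_)
        by_cases hx : x ∈ Ioo a b
        · simp [G, hx, hderiv x hx]
        · simp [G, hx, hf_zero x hx]

end Density

theorem poincare_inequality_general (a b : ℝ) (f : ℝ → ℝ)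
    (hf_pos : ∀ x ∈ Set.Ioo a b, 0 < f x)
    (hf_zero : ∀ x ∉ Set.Ioo a b, f x = 0)
    (hf_diff : ∀ x ∈ Set.Ioo a b, DifferentiableAt ℝ f x)
    (ν : Measure ℝ)
    (hν : ν = volume.withDensity fun x => ENNReal.ofReal (f x))
    (hν_prob : IsProbabilityMeasure ν)
    (hh_diff : ∀ x ∈ Set.Ioo a b, DifferentiableAt ℝ (hFun a b f) x)
    (hh_deriv_bdd : ∃ C : ℝ, ∀ x ∈ Set.Ioo a b, |deriv (hFun a b f) x| ≤ C)
    (g g' : ℝ → ℝ)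
    (hg : ∀ x ∈ Set.Ioo a b, HasDerivAt g (g' x) x)
    (hg'_bdd : ∃ C : ℝ, ∀ x ∈ Set.Ioo a b, |g' x| ≤ C) :
    variance g ν ≤ (sSup ((fun x => |hFun a b f x|) '' Set.Ioo a b)) * ∫ x, (g' x) ^ 2 ∂ν := by
  obtain ⟨C, hC⟩ := hg'_bdd
  obtain ⟨Ch, hCh⟩ := hh_deriv_bdd
  have hf0 : ∀ x, 0 ≤ f x := fun x => by
    by_cases hx : x ∈ Ioo a b
    exacts [(hf_pos x hx).le, (hf_zero x hx).ge]
  have hf_meas : AEMeasurable f := ContinuousOn.aemeasurable_of_eq_zero_compl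
    (fun x hx => (hf_diff x hx).continuousAt.continuousWithinAt) measurableSet_Ioo hf_zero
  refine variance_le_mul_integral_sq_of_setIntegral_Ici_le hf_meas hf0 hf_zero hν hg hC
    fun t ht => ?_
  rw [hν, ← densityMean_eq_integral hf_meas hf0 hf_zero,
    setIntegral_Ici_sub_densityMean hf_meas hf0 hf_zero (hf_pos t ht).ne']
  exact mul_le_mul_of_nonneg_right ((le_abs_self _).trans
    (le_csSup (bddAbove_abs_image_Ioo_of_abs_deriv_le hh_diff hCh) ⟨t, ht, rfl⟩)) (hf0 t)

/-- Lemma 2.3, Poincaré inequality: if `X` is a random variable with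
probability density `f` (i.e. has law `ν = f dx`), then for any differentiable `g : (a,b) → ℝ`
with `g` and `g'` uniformly bounded, `Var(g(X)) ≤ K E(g'(X)²)`, where
`K = sup_{a<x<b} |h(x)|`. -/
theorem poincare_inequality (a b : ℝ) (hab : a < b) (f : ℝ → ℝ)
    (hf_pos : ∀ x ∈ Set.Ioo a b, 0 < f x)
    (hf_zero : ∀ x ∉ Set.Ioo a b, f x = 0)
    (hf_diff : ∀ x ∈ Set.Ioo a b, DifferentiableAt ℝ f x)
    (ν : Measure ℝ)
    (hν : ν = volume.withDensity fun x => ENNReal.ofReal (f x))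
    (hν_prob : IsProbabilityMeasure ν)
    (hh_diff : ∀ x ∈ Set.Ioo a b, DifferentiableAt ℝ (hFun a b f) x)
    (hh_deriv_bdd : ∃ C : ℝ, ∀ x ∈ Set.Ioo a b, |deriv (hFun a b f) x| ≤ C)
    (g g' : ℝ → ℝ)
    (hg : ∀ x ∈ Set.Ioo a b, HasDerivAt g (g' x) x)
    (hg_bdd : ∃ C : ℝ, ∀ x ∈ Set.Ioo a b, |g x| ≤ C)
    (hg'_bdd : ∃ C : ℝ, ∀ x ∈ Set.Ioo a b, |g' x| ≤ C) :
    variance g ν ≤ (sSup ((fun x => |hFun a b f x|) '' Set.Ioo a b)) * ∫ x, (g' x) ^ 2 ∂ν :=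
  poincare_inequality_general a b f hf_pos hf_zero hf_diff ν hν hν_prob hh_diff hh_deriv_bdd g g' hg
    hg'_bdd

end
end

section
/- In the directed polymer model with environment law ν supported on the bounded interval (a,b), for any β ≥ 0 and any 1 ≤ k ≤ n, one has almost surely α_k' ≤ e^{4(b−a)β} α_k, where α_k' = E(α_k | F_k). -/
open MeasureTheory ProbabilityTheory Set

noncomputable section

/-- The energy `∑_{k=1}^n ω_{k, x_k}` of a path `p` in the environment `env`
(here `env k x` is `ω_{k+1, x}`, i.e. steps are indexed by `Fin n`). -/
def energy {d n : ℕ} (env : Fin n → (Fin d → ℤ) → ℝ) (p : PolymerPath d n) : ℝ :=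
  ∑ k : Fin n, env k (p.vertex k)

/-- The Gibbs weight `exp(β ∑_k ω_{k,x_k})` of a path. -/
def pathWeight {d n : ℕ} (β : ℝ) (env : Fin n → (Fin d → ℤ) → ℝ) (p : PolymerPath d n) : ℝ :=
  Real.exp (β * energy env p)

/-- The partition function `Z = ∑_{p ∈ 𝒫_n} exp(β ∑_k ω_{k,x_k})`. -/
def partitionZ (d n : ℕ) (β : ℝ) (env : Fin n → (Fin d → ℤ) → ℝ) : ℝ :=
  ∑' p : PolymerPath d n, pathWeight β env p

/-- The Gibbs (polymer) measure of a single path. -/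
def gibbsProb {d n : ℕ} (β : ℝ) (env : Fin n → (Fin d → ℤ) → ℝ) (p : PolymerPath d n) : ℝ :=
  pathWeight β env p / partitionZ d n β env

/-- `θ_{k,x}`: the Gibbs probability that the path visits `x` at step `k`
(`k : Fin n` represents step `k+1`). -/
def theta {d n : ℕ} (β : ℝ) (env : Fin n → (Fin d → ℤ) → ℝ) (k : Fin n) (x : Fin d → ℤ) : ℝ :=
  ∑' p : PolymerPath d n, if p.vertex k = x then gibbsProb β env p else 0

/-- `α_k = ∑_{x ∈ ℤ^d} θ_{k,x}²`. -/
def alphaOf {d n : ℕ} (β : ℝ) (env : Fin n → (Fin d → ℤ) → ℝ) (k : Fin n) : ℝ :=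
  ∑' x : Fin d → ℤ, (theta β env k x) ^ 2

/-- The (deterministic-level) environment obtained from the family of random variables `W`
at the sample point `ω`: `env k x = ω_{k,x} = W (k,x) ω`. -/
def envOf {d n : ℕ} {Ω : Type*} (W : Fin n × (Fin d → ℤ) → Ω → ℝ) (ω : Ω) :
    Fin n → (Fin d → ℤ) → ℝ :=
  fun k x => W (k, x) ω

/-- The σ-algebra `F_k` generated by the random variables `{ω_{j,y} : j ≠ k, y ∈ ℤ^d}`. -/
def sigmaAway {d n : ℕ} {Ω : Type*} [MeasurableSpace Ω]
    (W : Fin n × (Fin d → ℤ) → Ω → ℝ) (k : Fin n) : MeasurableSpace Ω :=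
  ⨆ i : {i : Fin n × (Fin d → ℤ) // i.1 ≠ k}, MeasurableSpace.comap (W i.val) inferInstance

/-- The random variable `α_k = ∑_x θ_{k,x}²`, as a function of the sample point. -/
def alphaRV {d n : ℕ} {Ω : Type*} (β : ℝ) (W : Fin n × (Fin d → ℤ) → Ω → ℝ) (k : Fin n)
    (ω : Ω) : ℝ :=
  alphaOf β (envOf W ω) k

/-! Replacing the step-`k` environment `ω_{k,·}` by the constant `a` gives an `F_k`-measurable
environment. Since `ω_{k,·} ∈ (a, b)`, this shifts every path energy by an amount in `[0, b - a]`,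
so every Gibbs probability, hence every `θ_{k,x}`, changes by a factor at most `e^{β(b-a)}`, and
`α_k` by a factor at most `C = e^{2β(b-a)}`, in both directions. Thus `α_k ≤ C α̃_k` and
`α̃_k ≤ C α_k` for the `F_k`-measurable `α̃_k`, and monotonicity of conditional expectation gives
`E(α_k | F_k) ≤ C α̃_k ≤ C² α_k`. -/

namespace PolymerPath

variable {d n : ℕ}

lemma abs_toFun_le (p : PolymerPath d n) (m : Fin (n + 1)) (i : Fin d) :
    |p.toFun m i| ≤ m := by
  induction m using Fin.induction with
  | zero => simp [p.start_eq]
  | succ j ih =>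
    have hstep : |p.toFun j.succ i - p.toFun j.castSucc i| ≤ 1 :=
      p.adj j ▸ Finset.single_le_sum (f := fun l => |p.toFun j.succ l - p.toFun j.castSucc l|)
        (fun l _ => abs_nonneg _) (Finset.mem_univ i)
    have := abs_sub_abs_le_abs_sub (p.toFun j.succ i) (p.toFun j.castSucc i)
    simp only [Fin.val_castSucc, Fin.val_succ] at ih ⊢
    push_cast
    linarith

instance : Finite (PolymerPath d n) := by
  let box := Set.Icc (-n : ℤ) n
  let F : PolymerPath d n → Fin (n + 1) → Fin d → box := fun p m i =>
    ⟨p.toFun m i, abs_le.mp ((p.abs_toFun_le m i).trans (by exact_mod_cast m.is_le))⟩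
  refine Finite.of_injective F fun p q h => ?_
  obtain ⟨f, _, _⟩ := p
  obtain ⟨g, _, _⟩ := q
  congr
  funext m i
  exact congrArg Subtype.val (congrFun (congrFun h m) i)

end PolymerPath

section Gibbs

variable {d n : ℕ} (β : ℝ) (env : Fin n → (Fin d → ℤ) → ℝ)

lemma partitionZ_eq_sum [Fintype (PolymerPath d n)] :
    partitionZ d n β env = ∑ p, pathWeight β env p :=
  tsum_fintype _

lemma pathWeight_pos (p : PolymerPath d n) : 0 < pathWeight β env p :=
  Real.exp_pos _

lemma partitionZ_pos (p : PolymerPath d n) : 0 < partitionZ d n β env := by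
  have := Fintype.ofFinite (PolymerPath d n)
  rw [partitionZ_eq_sum]
  exact Finset.sum_pos (fun q _ => pathWeight_pos β env q) ⟨p, Finset.mem_univ p⟩

lemma gibbsProb_nonneg (p : PolymerPath d n) : 0 ≤ gibbsProb β env p :=
  div_nonneg (pathWeight_pos β env p).le (partitionZ_pos β env p).le

lemma sum_gibbsProb [Fintype (PolymerPath d n)] [Nonempty (PolymerPath d n)] :
    ∑ p, gibbsProb β env p = 1 := by
  obtain ⟨p⟩ := ‹Nonempty (PolymerPath d n)›
  simp only [gibbsProb, ← Finset.sum_div, ← partitionZ_eq_sum]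
  exact div_self (partitionZ_pos β env p).ne'

lemma theta_eq_sum [Fintype (PolymerPath d n)] (k : Fin n) (x : Fin d → ℤ) :
    theta β env k x = ∑ p with p.vertex k = x, gibbsProb β env p := by
  rw [theta, tsum_fintype, Finset.sum_filter]

lemma theta_nonneg (k : Fin n) (x : Fin d → ℤ) : 0 ≤ theta β env k x := by
  have := Fintype.ofFinite (PolymerPath d n)
  rw [theta_eq_sum]
  exact Finset.sum_nonneg fun p _ => gibbsProb_nonneg β env p

lemma alphaOf_eq_sum [Fintype (PolymerPath d n)] (k : Fin n) :
    alphaOf β env k =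
      ∑ x ∈ Finset.univ.image (PolymerPath.vertex · k), theta β env k x ^ 2 := by
  refine tsum_eq_sum fun x hx => ?_
  rw [theta_eq_sum, Finset.sum_eq_zero fun p hp => (hx ?_).elim, sq, zero_mul]
  exact Finset.mem_image.mpr ⟨p, Finset.mem_univ p, (Finset.mem_filter.mp hp).2⟩

lemma sum_theta [Fintype (PolymerPath d n)] [Nonempty (PolymerPath d n)] (k : Fin n) :
    ∑ x ∈ Finset.univ.image (PolymerPath.vertex · k), theta β env k x = 1 := by
  simp only [theta_eq_sum]
  rw [Finset.sum_fiberwise_of_maps_to fun p _ => Finset.mem_image_of_mem _ (Finset.mem_univ p),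
    sum_gibbsProb]

lemma alphaOf_nonneg (k : Fin n) : 0 ≤ alphaOf β env k :=
  tsum_nonneg fun _ => sq_nonneg _

lemma alphaOf_le_one (k : Fin n) : alphaOf β env k ≤ 1 := by
  have := Fintype.ofFinite (PolymerPath d n)
  cases isEmpty_or_nonempty (PolymerPath d n)
  · simp [alphaOf_eq_sum]
  calc alphaOf β env k
      ≤ (∑ x ∈ Finset.univ.image (PolymerPath.vertex · k), theta β env k x) ^ 2 := by
        rw [alphaOf_eq_sum]
        exact Finset.sum_sq_le_sq_sum_of_nonneg fun x _ => theta_nonneg β env k x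
    _ = 1 := by rw [sum_theta, one_pow]

lemma measurable_alphaOf (k : Fin n) :
    Measurable fun env : Fin n → (Fin d → ℤ) → ℝ => alphaOf β env k := by
  have := Fintype.ofFinite (PolymerPath d n)
  simp only [alphaOf_eq_sum, theta_eq_sum, gibbsProb, partitionZ_eq_sum, pathWeight, energy]
  fun_prop

end Gibbs

section Perturbation

variable {d n : ℕ} {β Δ : ℝ} {e e' : Fin n → (Fin d → ℤ) → ℝ}

lemma energy_sub_energy_update (env : Fin n → (Fin d → ℤ) → ℝ) (k : Fin n)
    (c : (Fin d → ℤ) → ℝ) (p : PolymerPath d n) :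
    energy env p - energy (Function.update env k c) p =
      env k (p.vertex k) - c (p.vertex k) := by
  rw [energy, energy, ← Finset.sum_sub_distrib, Finset.sum_eq_single k]
  · simp
  · intro j _ hj
    simp [Function.update_of_ne hj]
  · simp

lemma energy_update_le {env : Fin n → (Fin d → ℤ) → ℝ} {k : Fin n} {c : (Fin d → ℤ) → ℝ}
    (hc : ∀ x, c x ≤ env k x) (p : PolymerPath d n) :
    energy (Function.update env k c) p ≤ energy env p := by
  linarith [energy_sub_energy_update env k c p, hc (p.vertex k)]

lemma energy_le_energy_update_add {env : Fin n → (Fin d → ℤ) → ℝ} {k : Fin n}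
    {c : (Fin d → ℤ) → ℝ} (hc : ∀ x, env k x ≤ c x + Δ) (p : PolymerPath d n) :
    energy env p ≤ energy (Function.update env k c) p + Δ := by
  linarith [energy_sub_energy_update env k c p, hc (p.vertex k)]

lemma pathWeight_le_pathWeight (hβ : 0 ≤ β) (hE : ∀ p, energy e p ≤ energy e' p)
    (p : PolymerPath d n) : pathWeight β e p ≤ pathWeight β e' p :=
  Real.exp_le_exp.2 (mul_le_mul_of_nonneg_left (hE p) hβ)

lemma pathWeight_le_exp_mul_pathWeight (hβ : 0 ≤ β) (hE' : ∀ p, energy e' p ≤ energy e p + Δ)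
    (p : PolymerPath d n) : pathWeight β e' p ≤ Real.exp (β * Δ) * pathWeight β e p := by
  rw [pathWeight, pathWeight, ← Real.exp_add]
  have := mul_le_mul_of_nonneg_left (hE' p) hβ
  exact Real.exp_le_exp.2 (by linarith)

lemma partitionZ_le_partitionZ (hβ : 0 ≤ β) (hE : ∀ p, energy e p ≤ energy e' p) :
    partitionZ d n β e ≤ partitionZ d n β e' := by
  have := Fintype.ofFinite (PolymerPath d n)
  simp only [partitionZ_eq_sum]
  exact Finset.sum_le_sum fun p _ => pathWeight_le_pathWeight hβ hE p

lemma partitionZ_le_exp_mul_partitionZ (hβ : 0 ≤ β)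
    (hE' : ∀ p, energy e' p ≤ energy e p + Δ) :
    partitionZ d n β e' ≤ Real.exp (β * Δ) * partitionZ d n β e := by
  have := Fintype.ofFinite (PolymerPath d n)
  simp only [partitionZ_eq_sum, Finset.mul_sum]
  exact Finset.sum_le_sum fun p _ => pathWeight_le_exp_mul_pathWeight hβ hE' p

lemma gibbsProb_le_exp_mul_gibbsProb (hβ : 0 ≤ β) (hE : ∀ p, energy e p ≤ energy e' p)
    (hE' : ∀ p, energy e' p ≤ energy e p + Δ) (p : PolymerPath d n) :
    gibbsProb β e' p ≤ Real.exp (β * Δ) * gibbsProb β e p := by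
  rw [gibbsProb, gibbsProb, mul_div_assoc']
  exact div_le_div₀ (mul_nonneg (Real.exp_pos _).le (pathWeight_pos β e p).le)
    (pathWeight_le_exp_mul_pathWeight hβ hE' p) (partitionZ_pos β e p)
    (partitionZ_le_partitionZ hβ hE)

lemma gibbsProb_le_exp_mul_gibbsProb' (hβ : 0 ≤ β) (hE : ∀ p, energy e p ≤ energy e' p)
    (hE' : ∀ p, energy e' p ≤ energy e p + Δ) (p : PolymerPath d n) :
    gibbsProb β e p ≤ Real.exp (β * Δ) * gibbsProb β e' p := by
  rw [gibbsProb, gibbsProb, mul_div_assoc', div_le_div_iff₀ (partitionZ_pos β e p)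
    (partitionZ_pos β e' p)]
  calc pathWeight β e p * partitionZ d n β e'
      ≤ pathWeight β e' p * (Real.exp (β * Δ) * partitionZ d n β e) :=
        mul_le_mul (pathWeight_le_pathWeight hβ hE p) (partitionZ_le_exp_mul_partitionZ hβ hE')
          (partitionZ_pos β e' p).le (Real.exp_pos _).le
    _ = Real.exp (β * Δ) * pathWeight β e' p * partitionZ d n β e := by ring

lemma theta_le_mul_theta {β' C : ℝ}
    (h : ∀ p, gibbsProb β e p ≤ C * gibbsProb β' e' p) (k : Fin n) (x : Fin d → ℤ) :
    theta β e k x ≤ C * theta β' e' k x := by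
  have := Fintype.ofFinite (PolymerPath d n)
  rw [theta_eq_sum, theta_eq_sum, Finset.mul_sum]
  exact Finset.sum_le_sum fun p _ => h p

lemma alphaOf_le_sq_mul_alphaOf {β' C : ℝ}
    (h : ∀ p, gibbsProb β e p ≤ C * gibbsProb β' e' p) (k : Fin n) :
    alphaOf β e k ≤ C ^ 2 * alphaOf β' e' k := by
  have := Fintype.ofFinite (PolymerPath d n)
  rw [alphaOf_eq_sum, alphaOf_eq_sum, Finset.mul_sum]
  refine Finset.sum_le_sum fun x _ => ?_
  rw [← mul_pow]
  exact pow_le_pow_left₀ (theta_nonneg β e k x) (theta_le_mul_theta h k x) 2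

end Perturbation

lemma condExp_le_of_le_stronglyMeasurable {Ω : Type*} {m m₀ : MeasurableSpace Ω}
    {μ : Measure Ω} {f g : Ω → ℝ} (hm : m ≤ m₀) [SigmaFinite (μ.trim hm)]
    (hf : Integrable f μ) (hg : Integrable g μ) (hgm : StronglyMeasurable[m] g)
    (hfg : f ≤ᵐ[μ] g) : μ[f|m] ≤ᵐ[μ] g :=
  (condExp_mono hf hg hfg).trans_eq (condExp_of_stronglyMeasurable hm hgm hg).eventuallyEq

section PolymerEnvironment

variable {d n : ℕ} {Ω : Type*} [MeasurableSpace Ω] {W : Fin n × (Fin d → ℤ) → Ω → ℝ}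

lemma sigmaAway_le (hW : ∀ i, Measurable (W i)) (k : Fin n) :
    sigmaAway W k ≤ ‹MeasurableSpace Ω› :=
  iSup_le fun i => (hW i.val).comap_le

lemma measurable_sigmaAway {j k : Fin n} (hjk : j ≠ k) (x : Fin d → ℤ) :
    Measurable[sigmaAway W k] (W (j, x)) :=
  Measurable.of_comap_le (le_iSup (fun i : {i : Fin n × (Fin d → ℤ) // i.1 ≠ k} =>
    MeasurableSpace.comap (W i.val) inferInstance) ⟨(j, x), hjk⟩)

lemma measurable_envOf (hW : ∀ i, Measurable (W i)) : Measurable (envOf W) :=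
  measurable_pi_lambda _ fun j => measurable_pi_lambda _ fun x => hW (j, x)

lemma measurable_update_envOf (k : Fin n) (c : (Fin d → ℤ) → ℝ) :
    Measurable[sigmaAway W k] fun ω => Function.update (envOf W ω) k c := by
  refine @measurable_pi_lambda _ _ _ (sigmaAway W k) _ _ fun j => ?_
  rcases eq_or_ne j k with rfl | hjk
  · simp only [Function.update_self]
    exact measurable_const
  · simp only [Function.update_of_ne hjk]
    exact @measurable_pi_lambda _ _ _ (sigmaAway W k) _ _ fun x => measurable_sigmaAway hjk x

lemma integrable_alphaOf_comp {μ : Measure Ω} [IsFiniteMeasure μ] (β : ℝ) (k : Fin n)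
    {E : Ω → Fin n → (Fin d → ℤ) → ℝ} (hE : Measurable E) :
    Integrable (fun ω => alphaOf β (E ω) k) μ :=
  .of_bound ((measurable_alphaOf β k).comp hE).aestronglyMeasurable 1 <| .of_forall fun ω => by
    rw [Real.norm_of_nonneg (alphaOf_nonneg β _ k)]
    exact alphaOf_le_one β _ k

end PolymerEnvironment

theorem condexp_alpha_le_general (d n : ℕ)
    (a b : ℝ) (ν : Measure ℝ)
    (hν_supp : ν (Set.Ioo a b)ᶜ = 0)
    (β : ℝ) (hβ : 0 ≤ β)
    (Ω : Type) [MeasurableSpace Ω] (P : Measure Ω) [IsProbabilityMeasure P]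
    (W : Fin n × (Fin d → ℤ) → Ω → ℝ)
    (hW_meas : ∀ i, Measurable (W i))
    (hW_law : ∀ i, P.map (W i) = ν)
    (k : Fin n) :
    ∀ᵐ ω ∂P, (P[alphaRV β W k|sigmaAway W k]) ω
      ≤ Real.exp (4 * (b - a) * β) * alphaRV β W k ω := by
  set C := Real.exp (β * (b - a)) ^ 2
  let frozenEnv : Ω → Fin n → (Fin d → ℤ) → ℝ := fun ω =>
    Function.update (envOf W ω) k fun _ => a
  have hfrozenEnv_meas : Measurable[sigmaAway W k] frozenEnv := measurable_update_envOf k _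
  have hsupp : ∀ᵐ ω ∂P, ∀ x, W (k, x) ω ∈ Set.Ioo a b := ae_all_iff.2 fun x =>
    ae_of_ae_map (hW_meas _).aemeasurable (by rw [hW_law]; exact hν_supp)
  have hcmp : ∀ᵐ ω ∂P, alphaRV β W k ω ≤ C * alphaOf β (frozenEnv ω) k ∧
      alphaOf β (frozenEnv ω) k ≤ C * alphaRV β W k ω := by
    filter_upwards [hsupp] with ω hω
    have hlo := energy_update_le (env := envOf W ω) (k := k) fun x => (hω x).1.le
    have hhi := energy_le_energy_update_add (env := envOf W ω) (k := k) (c := fun _ => a)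
      fun x => (hω x).2.le.trans_eq (add_sub_cancel a b).symm
    exact ⟨alphaOf_le_sq_mul_alphaOf (gibbsProb_le_exp_mul_gibbsProb hβ hlo hhi) k,
      alphaOf_le_sq_mul_alphaOf (gibbsProb_le_exp_mul_gibbsProb' hβ hlo hhi) k⟩
  have hm := sigmaAway_le hW_meas k
  have hcond : P[alphaRV β W k|sigmaAway W k] ≤ᵐ[P] fun ω => C * alphaOf β (frozenEnv ω) k :=
    condExp_le_of_le_stronglyMeasurable hm
      (integrable_alphaOf_comp β k (measurable_envOf hW_meas))
      ((integrable_alphaOf_comp β k (hfrozenEnv_meas.mono hm le_rfl)).const_mul C)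
      (((measurable_alphaOf β k).comp hfrozenEnv_meas).const_mul C).stronglyMeasurable
      (hcmp.mono fun ω h => h.1)
  filter_upwards [hcond, hcmp] with ω hle hcmpω
  calc _ ≤ C * alphaOf β (frozenEnv ω) k := hle
    _ ≤ C * (C * alphaRV β W k ω) := mul_le_mul_of_nonneg_left hcmpω.2 (by positivity)
    _ = Real.exp (4 * (b - a) * β) * alphaRV β W k ω := by
      rw [← mul_assoc, ← pow_two, ← pow_mul, ← Real.exp_nat_mul]
      ring_nf

/-- Lemma 2.5: in the directed polymer model with environment law `ν`
supported on the bounded interval `(a,b)`, for any `β ≥ 0` and `1 ≤ k ≤ n`, almost surely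
`α_k' ≤ e^{4(b−a)β} α_k`, where `α_k' = E(α_k | F_k)`. -/
theorem condexp_alpha_le (d n : ℕ) (hd : 1 ≤ d) (hn : 1 ≤ n)
    (a b : ℝ) (hab : a < b) (ν : Measure ℝ) [IsProbabilityMeasure ν]
    (hν_supp : ν (Set.Ioo a b)ᶜ = 0)
    (β : ℝ) (hβ : 0 ≤ β)
    (Ω : Type) [MeasurableSpace Ω] (P : Measure Ω) [IsProbabilityMeasure P]
    (W : Fin n × (Fin d → ℤ) → Ω → ℝ)
    (hW_meas : ∀ i, Measurable (W i))
    (hW_indep : iIndepFun W P)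
    (hW_law : ∀ i, P.map (W i) = ν)
    (k : Fin n) :
    ∀ᵐ ω ∂P, (P[alphaRV β W k|sigmaAway W k]) ω
      ≤ Real.exp (4 * (b - a) * β) * alphaRV β W k ω :=
  condexp_alpha_le_general d n a b ν hν_supp β hβ Ω P W hW_meas hW_law k

end
end
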